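/- For any n×n complex matrix A and t ∈ ℝ, defining c(t²A) = Σ_{k≥0} (−1)^k (t²A)^k/(2k)! and s(t,A) = t·Σ_{k≥0} (−1)^k (t²A)^k/(2k+1)!, we have the double-angle identities c(4t²A) = 2·c(t²A)² − I and s(2t,A) = 2·s(t,A)·c(t²A). -/

import Mathlib

/-!
Write `x = t²A`. Squaring `c` and multiplying `s` by `c` are Cauchy products of power series
in `x`. After clearing factorials, the `m`-th coefficients of these products become the
binomial sums `∑ᵢ C(2m, 2i) = 2^(2m-1)` (for `m ≥ 1`) and `∑ᵢ C(2m+1, 2i+1) = 4^m`, which are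
exactly the `m`-th coefficients of `c(4x)` and `s(4x)`. Both sums follow from adding or
subtracting `(1 + 1)^N` and `(1 - 1)^N`.
-/

/-- `c(t²A) = Σ_{k≥0} (-1)^k (t²A)^k/(2k)!`. -/
noncomputable def cFun {n : Type*} [Fintype n] [DecidableEq n] (t : ℝ) (A : Matrix n n ℂ) :
    Matrix n n ℂ :=
  ∑' k : ℕ, ((-1 : ℂ) ^ k / (2 * k).factorial) • (((t : ℂ) ^ 2) • A) ^ k

/-- `s(t,A) = t Σ_{k≥0} (-1)^k (t²A)^k/(2k+1)!`. -/
noncomputable def sFun {n : Type*} [Fintype n] [DecidableEq n] (t : ℝ) (A : Matrix n n ℂ) :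
    Matrix n n ℂ :=
  (t : ℂ) • ∑' k : ℕ, ((-1 : ℂ) ^ k / (2 * k + 1).factorial) • (((t : ℂ) ^ 2) • A) ^ k

open Finset Nat

theorem Finset.sum_range_two_mul {M : Type*} [AddCommMonoid M] (f : ℕ → M) (m : ℕ) :
    ∑ k ∈ range (2 * m), f k = ∑ i ∈ range m, (f (2 * i) + f (2 * i + 1)) := by
  induction m with
  | zero => simp
  | succ m ih =>
    rw [mul_add, mul_one, sum_range_succ, sum_range_succ, sum_range_succ, ih, add_assoc]

namespace Nat

theorem sum_range_one_add_neg_one_pow_mul_choose (n : ℕ) :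
    ∑ k ∈ range (n + 1), (1 + (-1) ^ k) * (n.choose k : ℤ) = 2 ^ n + if n = 0 then 1 else 0 := by
  simp only [add_mul, one_mul, sum_add_distrib, Int.alternating_sum_range_choose]
  exact_mod_cast congrArg (· + _) (sum_range_choose n)

theorem sum_range_one_sub_neg_one_pow_mul_choose (n : ℕ) :
    ∑ k ∈ range (n + 1), (1 - (-1) ^ k) * (n.choose k : ℤ) = 2 ^ n - if n = 0 then 1 else 0 := by
  simp only [sub_mul, one_mul, sum_sub_distrib, Int.alternating_sum_range_choose]
  rw [← Nat.cast_sum, sum_range_choose]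
  push_cast
  rfl

theorem two_mul_sum_range_choose_two_mul_even (m : ℕ) :
    2 * ∑ i ∈ range (m + 1), (2 * m).choose (2 * i) = 4 ^ m + if m = 0 then 1 else 0 := by
  have h := sum_range_one_add_neg_one_pow_mul_choose (2 * m)
  simp only [sum_range_succ, sum_range_two_mul, pow_succ, pow_mul] at h
  norm_num [← mul_sum] at h
  rw [sum_range_succ, choose_self]
  zify
  simp only [Nat.cast_eq_zero]
  linear_combination h

theorem sum_range_choose_two_mul_add_one_odd (m : ℕ) :
    ∑ i ∈ range (m + 1), (2 * m + 1).choose (2 * i + 1) = 4 ^ m := by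
  have h := sum_range_one_sub_neg_one_pow_mul_choose (2 * m + 1)
  rw [show 2 * m + 1 + 1 = 2 * (m + 1) by ring, sum_range_two_mul] at h
  simp only [pow_succ, pow_mul] at h
  norm_num [← mul_sum] at h
  zify
  linarith

end Nat

section Coefficients

variable (𝕂 : Type*) [Field 𝕂]

def cosCoeff (k : ℕ) : 𝕂 := (-1) ^ k / (2 * k)!

def sincCoeff (k : ℕ) : 𝕂 := (-1) ^ k / (2 * k + 1)!

variable {𝕂} [CharZero 𝕂]

theorem inv_factorial_mul_inv_factorial (a b : ℕ) :
    (a ! : 𝕂)⁻¹ * (b ! : 𝕂)⁻¹ = (a + b).choose a / (a + b)! := by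
  have : ((a + b)! : 𝕂) ≠ 0 := Nat.cast_ne_zero.2 (factorial_ne_zero _)
  rw [Nat.cast_add_choose, div_div_cancel_left' this, mul_inv]

theorem cosCoeff_mul_cosCoeff (i j : ℕ) :
    cosCoeff 𝕂 i * cosCoeff 𝕂 j = cosCoeff 𝕂 (i + j) * (2 * (i + j)).choose (2 * i) := by
  simp only [cosCoeff, div_eq_mul_inv, mul_mul_mul_comm, ← pow_add,
    inv_factorial_mul_inv_factorial, mul_add]
  ring

theorem sincCoeff_mul_cosCoeff (i j : ℕ) :
    sincCoeff 𝕂 i * cosCoeff 𝕂 j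
      = sincCoeff 𝕂 (i + j) * (2 * (i + j) + 1).choose (2 * i + 1) := by
  simp only [sincCoeff, cosCoeff, div_eq_mul_inv, mul_mul_mul_comm, ← pow_add,
    inv_factorial_mul_inv_factorial, show 2 * (i + j) + 1 = 2 * i + 1 + 2 * j by ring]
  ring

theorem two_mul_sum_antidiagonal_cosCoeff_mul_cosCoeff (m : ℕ) :
    2 * ∑ p ∈ antidiagonal m, cosCoeff 𝕂 p.1 * cosCoeff 𝕂 p.2
      = 4 ^ m * cosCoeff 𝕂 m + if m = 0 then 1 else 0 := by
  have hsum := congrArg (Nat.cast : ℕ → 𝕂) (two_mul_sum_range_choose_two_mul_even m)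
  push_cast at hsum
  rw [sum_congr rfl fun p hp => by rw [cosCoeff_mul_cosCoeff, mem_antidiagonal.1 hp], ← mul_sum,
    Nat.sum_antidiagonal_eq_sum_range_succ_mk, mul_left_comm, hsum]
  split_ifs with hm
  · simp [hm, cosCoeff]
  · ring

theorem sum_antidiagonal_sincCoeff_mul_cosCoeff (m : ℕ) :
    ∑ p ∈ antidiagonal m, sincCoeff 𝕂 p.1 * cosCoeff 𝕂 p.2 = 4 ^ m * sincCoeff 𝕂 m := by
  have hsum := congrArg (Nat.cast : ℕ → 𝕂) (sum_range_choose_two_mul_add_one_odd m)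
  push_cast at hsum
  rw [sum_congr rfl fun p hp => by rw [sincCoeff_mul_cosCoeff, mem_antidiagonal.1 hp], ← mul_sum,
    Nat.sum_antidiagonal_eq_sum_range_succ_mk, hsum, mul_comm]

end Coefficients

section Series

variable {𝕂 𝔸 : Type*}

theorem summable_norm_smul_pow_of_norm_le_inv_factorial [NormedField 𝕂] [NormedRing 𝔸]
    [NormedAlgebra 𝕂 𝔸] {a : ℕ → 𝕂} (ha : ∀ k, ‖a k‖ ≤ (k ! : ℝ)⁻¹) (x : 𝔸) :
    Summable fun k => ‖a k • x ^ k‖ := by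
  refine .of_norm_bounded_eventually_nat (Real.summable_pow_div_factorial ‖x‖) ?_
  filter_upwards [Filter.eventually_ge_atTop 1] with k hk
  calc ‖‖a k • x ^ k‖‖ = ‖a k • x ^ k‖ := norm_norm _
    _ ≤ ‖a k‖ * ‖x‖ ^ k :=
      (norm_smul_le _ _).trans (mul_le_mul_of_nonneg_left (norm_pow_le' x hk) (norm_nonneg _))
    _ ≤ (k ! : ℝ)⁻¹ * ‖x‖ ^ k := by gcongr; exact ha k
    _ = ‖x‖ ^ k / k ! := inv_mul_eq_div _ _

theorem tsum_smul_pow_mul_tsum_smul_pow [NormedField 𝕂] [NormedRing 𝔸] [NormedAlgebra 𝕂 𝔸]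
    [CompleteSpace 𝔸] {a b : ℕ → 𝕂} {x : 𝔸} (ha : Summable fun k => ‖a k • x ^ k‖)
    (hb : Summable fun k => ‖b k • x ^ k‖) :
    (∑' k, a k • x ^ k) * ∑' k, b k • x ^ k
      = ∑' m, (∑ p ∈ antidiagonal m, a p.1 * b p.2) • x ^ m := by
  rw [tsum_mul_tsum_eq_tsum_sum_antidiagonal_of_summable_norm ha hb]
  refine tsum_congr fun m => ?_
  rw [sum_smul]
  refine sum_congr rfl fun p hp => ?_
  rw [smul_mul_smul_comm, ← pow_add, mem_antidiagonal.1 hp]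

variable [RCLike 𝕂]

theorem norm_cosCoeff_le (k : ℕ) : ‖cosCoeff 𝕂 k‖ ≤ (k ! : ℝ)⁻¹ := by
  rw [cosCoeff, norm_div, norm_pow, norm_neg, norm_one, one_pow, RCLike.norm_natCast, one_div]
  gcongr
  omega

theorem norm_sincCoeff_le (k : ℕ) : ‖sincCoeff 𝕂 k‖ ≤ (k ! : ℝ)⁻¹ := by
  rw [sincCoeff, norm_div, norm_pow, norm_neg, norm_one, one_pow, RCLike.norm_natCast, one_div]
  gcongr
  omega

variable (𝕂) [Ring 𝔸] [TopologicalSpace 𝔸] [Module 𝕂 𝔸]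

-- For `x = y²` these are `cos y` and `sin y / y`.
noncomputable def cosSqrt (x : 𝔸) : 𝔸 := ∑' k, cosCoeff 𝕂 k • x ^ k

noncomputable def sincSqrt (x : 𝔸) : 𝔸 := ∑' k, sincCoeff 𝕂 k • x ^ k

end Series

section DoubleAngle

variable {𝕂 𝔸 : Type*} [RCLike 𝕂] [NormedRing 𝔸] [NormedAlgebra 𝕂 𝔸] [CompleteSpace 𝔸]

theorem cosSqrt_four_smul (x : 𝔸) :
    cosSqrt 𝕂 ((4 : 𝕂) • x) = (2 : 𝕂) • cosSqrt 𝕂 x ^ 2 - 1 := by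
  have hc := summable_norm_smul_pow_of_norm_le_inv_factorial (norm_cosCoeff_le (𝕂 := 𝕂)) x
  have hc4 :=
    summable_norm_smul_pow_of_norm_le_inv_factorial (norm_cosCoeff_le (𝕂 := 𝕂)) ((4 : 𝕂) • x)
  have hone : HasSum (fun m : ℕ => (if m = 0 then (1 : 𝕂) else 0) • x ^ m) 1 := by
    convert hasSum_ite_eq 0 (1 : 𝔸) using 2 with m
    split_ifs with hm <;> simp [hm]
  rw [eq_sub_iff_add_eq, ← hone.tsum_eq, cosSqrt, ← hc4.of_norm.tsum_add hone.summable]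
  calc _ = ∑' m, (2 * ∑ p ∈ antidiagonal m, cosCoeff 𝕂 p.1 * cosCoeff 𝕂 p.2) • x ^ m := by
        simp_rw [two_mul_sum_antidiagonal_cosCoeff_mul_cosCoeff, add_smul, smul_pow, smul_smul,
          mul_comm]
    _ = (2 : 𝕂) • cosSqrt 𝕂 x ^ 2 := by
        rw [sq, cosSqrt, tsum_smul_pow_mul_tsum_smul_pow hc hc, ← tsum_const_smul'']
        simp_rw [smul_smul]

theorem sincSqrt_four_smul (x : 𝔸) :
    sincSqrt 𝕂 ((4 : 𝕂) • x) = sincSqrt 𝕂 x * cosSqrt 𝕂 x := by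
  rw [sincSqrt, sincSqrt, cosSqrt, tsum_smul_pow_mul_tsum_smul_pow
    (summable_norm_smul_pow_of_norm_le_inv_factorial norm_sincCoeff_le x)
    (summable_norm_smul_pow_of_norm_le_inv_factorial norm_cosCoeff_le x)]
  simp_rw [sum_antidiagonal_sincCoeff_mul_cosCoeff, smul_pow, smul_smul, mul_comm]

end DoubleAngle

/-- Double-angle identities: `c(4t²A) = 2c(t²A)² - I` and `s(2t,A) = 2s(t,A)c(t²A)`. -/
theorem c_s_double_angle {n : Type*} [Fintype n] [DecidableEq n] (t : ℝ) (A : Matrix n n ℂ) :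
    cFun (2 * t) A = (2 : ℂ) • (cFun t A) ^ 2 - 1 ∧
    sFun (2 * t) A = (2 : ℂ) • (sFun t A * cFun t A) := by
  -- Any norm induces the entrywise topology in which `cFun` and `sFun` are summed.
  let _ : NormedRing (Matrix n n ℂ) := Matrix.linftyOpNormedRing
  let _ : NormedAlgebra ℂ (Matrix n n ℂ) := Matrix.linftyOpNormedAlgebra
  set X := (t : ℂ) ^ 2 • A
  have hX : ((2 * t : ℝ) : ℂ) ^ 2 • A = (4 : ℂ) • X := by
    rw [smul_smul]; push_cast; ring_nf
  constructor
  · calc cFun (2 * t) A = cosSqrt ℂ ((4 : ℂ) • X) := by rw [← hX]; rfl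
      _ = (2 : ℂ) • cosSqrt ℂ X ^ 2 - 1 := cosSqrt_four_smul X
  · calc sFun (2 * t) A = ((2 * t : ℝ) : ℂ) • sincSqrt ℂ ((4 : ℂ) • X) := by rw [← hX]; rfl
      _ = ((2 * t : ℝ) : ℂ) • (sincSqrt ℂ X * cosSqrt ℂ X) :=
        congrArg _ (sincSqrt_four_smul X)
      _ = (2 : ℂ) • (((t : ℂ) • sincSqrt ℂ X) * cosSqrt ℂ X) := by
        rw [smul_mul_assoc, smul_smul, Complex.ofReal_mul, Complex.ofReal_ofNat]
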